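/- Let (X,d,μ) be a space of homogeneous type with μ(X) = ∞ and let w ∈ A_∞ (i.e., w ∈ A_{p₀} for some 1 ≤ p₀ < ∞). Then for every sufficiently small γ ∈ (0,1) (depending on w) there exists a constant C such that for every measurable function F on X × (0,∞), every ball B ⊂ X, and every measurable set E ⊂ B, setting Ω = {x ∈ B : ℳ(χ_E)(x) > γ}, one has ∬_{B̂ \ Ω̂} |F(y,t)|² (w(B(y,t))/V(y,t)) dμ(y) dt/t ≤ C ∫_{B \ E} (𝒜(F)(x))² w(x) dμ(x). -/

import Mathlib

open MeasureTheory Metric Set ENNReal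

/-- The Muckenhoupt `A_1` condition on a metric measure space. -/
def IsA1 {X : Type*} [MetricSpace X] [MeasurableSpace X]
    (μ : Measure X) (w : X → ℝ≥0∞) : Prop :=
  ∃ C : ℝ≥0∞, C < ⊤ ∧ ∀ (x : X) (r : ℝ), 0 < r →
    ∀ᵐ z ∂(μ.restrict (ball x r)),
      (∫⁻ y in ball x r, w y ∂μ) / μ (ball x r) ≤ C * w z

/-- The Muckenhoupt `A_p` condition (for `1 < p < ∞`) on a metric measure space. -/
def IsAp {X : Type*} [MetricSpace X] [MeasurableSpace X]
    (μ : Measure X) (w : X → ℝ≥0∞) (p : ℝ) : Prop :=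
  ∃ C : ℝ≥0∞, C < ⊤ ∧ ∀ (x : X) (r : ℝ), 0 < r →
    ((∫⁻ y in ball x r, w y ∂μ) / μ (ball x r)) *
      ((∫⁻ y in ball x r, w y ^ (-(1 / (p - 1))) ∂μ) / μ (ball x r)) ^ (p - 1) ≤ C

/-- The uncentered Hardy–Littlewood maximal function of the indicator of `E`:
`ℳ(χ_E)(x) = sup { μ(E ∩ B')/μ(B') : B' a ball containing x }`. -/
noncomputable def maxFn {X : Type*} [MetricSpace X] [MeasurableSpace X]
    (μ : Measure X) (E : Set X) (x : X) : ℝ≥0∞ :=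
  ⨆ (z : X) (r : ℝ) (_ : 0 < r) (_ : x ∈ ball z r),
    μ (E ∩ ball z r) / μ (ball z r)

/-- The area functional
`𝒜(F)(x) = (∬_{d(x,y)<t} |F(y,t)|² dμ(y) dt / (V(x,t) t))^{1/2}`. -/
noncomputable def areaA {X : Type*} [MetricSpace X] [MeasurableSpace X]
    (μ : Measure X) (F : X → ℝ → ℝ) (x : X) : ℝ≥0∞ :=
  (∫⁻ t in Set.Ioi (0 : ℝ), ∫⁻ y in ball x t,
      ENNReal.ofReal ((F y t) ^ 2) / (μ (ball x t) * ENNReal.ofReal t) ∂μ) ^ (1 / 2 : ℝ)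


lemma aux_pow_doubling {X : Type*} [MetricSpace X] [MeasurableSpace X]
    (μ : Measure X) (Cd : ℝ≥0∞)
    (hdb : ∀ (x : X) (r : ℝ), 0 < r → μ (ball x (2 * r)) ≤ Cd * μ (ball x r)) :
    ∀ (k : ℕ) (x : X) (r : ℝ), 0 < r → μ (ball x (2 ^ k * r)) ≤ Cd ^ k * μ (ball x r) := by
  intro k
  induction k with
  | zero => intro x r hr; simp
  | succ n ih =>
      intro x r hr
      have h1 : (2 : ℝ) ^ (n + 1) * r = 2 * (2 ^ n * r) := by ring
      rw [h1]
      calc μ (ball x (2 * (2 ^ n * r))) ≤ Cd * μ (ball x (2 ^ n * r)) :=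
            hdb x _ (by positivity)
        _ ≤ Cd * (Cd ^ n * μ (ball x r)) := mul_le_mul_right (ih x r hr) Cd
        _ = Cd ^ (n + 1) * μ (ball x r) := by ring

lemma aux_totallyBounded {X : Type*} [MetricSpace X] [MeasurableSpace X] [BorelSpace X]
    (μ : Measure X) (Cd : ℝ≥0∞) (hCd : Cd < ⊤)
    (hdb : ∀ (x : X) (r : ℝ), 0 < r → μ (ball x (2 * r)) ≤ Cd * μ (ball x r))
    (hpos : ∀ (x : X) (r : ℝ), 0 < r → 0 < μ (ball x r))
    (hfin : ∀ (x : X) (r : ℝ), 0 < r → μ (ball x r) < ⊤)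
    (c : X) (R : ℝ) : TotallyBounded (ball c R) := by
  classical
  rcases le_or_gt R 0 with hR | hR
  · rw [ball_eq_empty.mpr hR]; exact totallyBounded_empty
  by_contra htb
  rw [Metric.totallyBounded_iff] at htb
  push_neg at htb
  obtain ⟨ε, hε, hcov⟩ := htb
  have key : ∀ t : Finset X, ∃ x, x ∈ ball c R ∧ ∀ y ∈ t, ε ≤ dist x y := by
    intro t
    obtain ⟨x, hx, hx2⟩ := Set.not_subset.mp (hcov t t.finite_toSet)
    refine ⟨x, hx, fun y hy => ?_⟩
    by_contra hlt
    exact hx2 (Set.mem_biUnion hy (by simpa [mem_ball, dist_comm] using not_le.mp hlt))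
  choose f hf1 hf2 using key
  set v : ℕ → Finset X := fun n => Nat.rec ∅ (fun _ p => insert (f p) p) n with hv
  set u : ℕ → X := fun n => f (v n) with hu
  have hvsucc : ∀ n, v (n + 1) = insert (u n) (v n) := fun n => rfl
  have hmono : ∀ m n, m ≤ n → v m ⊆ v n := by
    intro m n h
    induction h with
    | refl => exact Finset.Subset.refl _
    | @step k hk ih =>
        exact ih.trans (by rw [hvsucc k]; exact Finset.subset_insert _ _)
  have hmem : ∀ m n, m < n → u m ∈ v n := by
    intro m n h
    exact hmono (m + 1) n h ((hvsucc m) ▸ Finset.mem_insert_self _ _)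
  have hsep : ∀ m n, m < n → ε ≤ dist (u n) (u m) :=
    fun m n h => hf2 (v n) (u m) (hmem m n h)
  have hsep' : ∀ m n, m ≠ n → ε ≤ dist (u n) (u m) := by
    intro m n h
    rcases lt_or_gt_of_ne h with h' | h'
    · exact hsep m n h'
    · rw [dist_comm]; exact hsep n m h'
  have hballmem : ∀ n, u n ∈ ball c R := fun n => hf1 (v n)
  -- disjointness
  have hdisj : Pairwise (Function.onFun Disjoint fun n => ball (u n) (ε / 2)) := by
    intro m n hmn
    rw [Function.onFun]
    rw [Set.disjoint_left]
    intro z hzm hzn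
    have : dist (u n) (u m) < ε := by
      calc dist (u n) (u m) ≤ dist (u n) z + dist z (u m) := dist_triangle _ _ _
        _ < ε / 2 + ε / 2 := by
            rw [mem_ball] at hzm hzn
            rw [dist_comm z (u n)] at hzn
            exact add_lt_add hzn hzm
        _ = ε := by ring
    exact absurd this (not_lt.mpr (hsep' m n hmn))
  -- lower bound on measures
  obtain ⟨k, hk⟩ := pow_unbounded_of_one_lt (2 * R / (ε / 2)) (one_lt_two (α := ℝ))
  have hk' : 2 * R ≤ 2 ^ k * (ε / 2) := by
    rw [div_lt_iff₀ (by positivity)] at hk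
    linarith
  have hCd0 : Cd ≠ 0 := by
    intro h0
    have := (hdb c 1 one_pos)
    rw [h0, zero_mul] at this
    exact absurd (le_antisymm this bot_le) (hpos c (2 * 1) (by norm_num)).ne'
  have hlow : ∀ n, μ (ball c R) / Cd ^ k ≤ μ (ball (u n) (ε / 2)) := by
    intro n
    have h1 : ball c R ⊆ ball (u n) (2 * R) := by
      intro z hz
      rw [mem_ball] at hz ⊢
      have := dist_triangle z c (u n)
      have h2 : dist c (u n) < R := by rw [dist_comm]; exact hballmem n
      linarith
    have h3 : μ (ball c R) ≤ Cd ^ k * μ (ball (u n) (ε / 2)) := by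
      calc μ (ball c R) ≤ μ (ball (u n) (2 * R)) := measure_mono h1
        _ ≤ μ (ball (u n) (2 ^ k * (ε / 2))) := measure_mono (ball_subset_ball hk')
        _ ≤ Cd ^ k * μ (ball (u n) (ε / 2)) := aux_pow_doubling μ Cd hdb k _ _ (by positivity)
    rw [ENNReal.div_le_iff_le_mul (Or.inl (pow_ne_zero k hCd0))
      (Or.inl (ENNReal.pow_ne_top hCd.ne))]
    rw [mul_comm]
    exact h3
  set δ : ℝ≥0∞ := μ (ball c R) / Cd ^ k with hδdef
  have hδ0 : δ ≠ 0 := by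
    rw [hδdef]
    simp only [ne_eq, ENNReal.div_eq_zero_iff, not_or]
    exact ⟨(hpos c R hR).ne', ENNReal.pow_ne_top hCd.ne⟩
  have htop : (⊤ : ℝ≥0∞) ≤ μ (ball c (R + ε / 2)) := by
    calc (⊤ : ℝ≥0∞) = ∑' _ : ℕ, δ := (tsum_const_eq_top_of_ne_zero hδ0).symm
      _ ≤ ∑' n : ℕ, μ (ball (u n) (ε / 2)) := ENNReal.tsum_le_tsum hlow
      _ = μ (⋃ n, ball (u n) (ε / 2)) :=
          (measure_iUnion hdisj fun n => measurableSet_ball).symm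
      _ ≤ μ (ball c (R + ε / 2)) := by
          refine measure_mono (Set.iUnion_subset fun n z hz => ?_)
          rw [mem_ball] at hz ⊢
          have := dist_triangle z (u n) c
          have h2 : dist (u n) c < R := hballmem n
          linarith
  exact absurd (lt_of_le_of_lt htop (hfin c (R + ε / 2) (by positivity))) (lt_irrefl _)

lemma aux_secondCountable {X : Type*} [MetricSpace X] [MeasurableSpace X] [BorelSpace X]
    (μ : Measure X) (Cd : ℝ≥0∞) (hCd : Cd < ⊤)
    (hdb : ∀ (x : X) (r : ℝ), 0 < r → μ (ball x (2 * r)) ≤ Cd * μ (ball x r))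
    (hpos : ∀ (x : X) (r : ℝ), 0 < r → 0 < μ (ball x r))
    (hfin : ∀ (x : X) (r : ℝ), 0 < r → μ (ball x r) < ⊤)
    (x₀ : X) : SecondCountableTopology X := by
  have hsep : TopologicalSpace.SeparableSpace X := by
    rw [← TopologicalSpace.isSeparable_univ_iff]
    have huniv : (Set.univ : Set X) = ⋃ n : ℕ, ball x₀ (n + 1) := by
      ext x
      simp only [Set.mem_univ, Set.mem_iUnion, mem_ball, true_iff]
      obtain ⟨n, hn⟩ := exists_nat_gt (dist x x₀)
      exact ⟨n, by push_cast; linarith⟩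
    rw [huniv]
    exact TopologicalSpace.IsSeparable.iUnion fun n =>
      (aux_totallyBounded μ Cd hCd hdb hpos hfin x₀ (n + 1)).isSeparable
  exact UniformSpace.secondCountable_of_separable X

lemma aux_sigmaFinite {X : Type*} [MetricSpace X] [MeasurableSpace X] [BorelSpace X]
    (μ : Measure X)
    (hfin : ∀ (x : X) (r : ℝ), 0 < r → μ (ball x r) < ⊤)
    (x₀ : X) : SigmaFinite μ := by
  refine ⟨⟨⟨fun n => ball x₀ (n + 1), fun _ => trivial, fun n => hfin _ _ (by positivity), ?_⟩⟩⟩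
  ext x
  simp only [Set.mem_iUnion, mem_ball, Set.mem_univ, iff_true]
  obtain ⟨n, hn⟩ := exists_nat_gt (dist x x₀)
  exact ⟨n, by push_cast; linarith⟩

/-- Key weight lemma: if `w ∈ A_{p₀}` then for any ball and any subset `S` of at least
half the measure of the ball, `w(ball) ≤ K w(S)`. -/
lemma aux_KW {X : Type*} [MetricSpace X] [MeasurableSpace X] [BorelSpace X]
    (μ : Measure X)
    (hpos : ∀ (x : X) (r : ℝ), 0 < r → 0 < μ (ball x r))
    (hfin : ∀ (x : X) (r : ℝ), 0 < r → μ (ball x r) < ⊤)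
    (w : X → ℝ≥0∞) (hw : Measurable w)
    (hwloc : ∀ (x : X) (r : ℝ), 0 < r → ∫⁻ y in ball x r, w y ∂μ < ⊤)
    (p₀ : ℝ) (hp₀ : 1 ≤ p₀)
    (hAinf : (p₀ = 1 → IsA1 μ w) ∧ (1 < p₀ → IsAp μ w p₀)) :
    ∃ K : ℝ≥0∞, K < ⊤ ∧ ∀ (y : X) (t : ℝ), 0 < t → ∀ S : Set X, MeasurableSet S →
      S ⊆ ball y t → μ (ball y t) ≤ 2 * μ S →
      (∫⁻ z in ball y t, w z ∂μ) ≤ K * ∫⁻ z in S, w z ∂μ := by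
  rcases eq_or_lt_of_le hp₀ with hp1 | hp1
  · -- case p₀ = 1
    obtain ⟨C1, hC1top, hC1⟩ := hAinf.1 hp1.symm
    refine ⟨2 * (C1 + 1), by finiteness, ?_⟩
    intro y t ht S hSm hSsub hShalf
    set V := μ (ball y t) with hV
    set W := ∫⁻ z in ball y t, w z ∂μ with hW
    have hV0 : V ≠ 0 := (hpos y t ht).ne'
    have hVtop : V ≠ ⊤ := (hfin y t ht).ne
    have hae : ∀ᵐ z ∂(μ.restrict S), W / V ≤ (C1 + 1) * w z := by
      have h1 : ∀ᵐ z ∂(μ.restrict (ball y t)), W / V ≤ (C1 + 1) * w z :=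
        (hC1 y t ht).mono fun z hz => hz.trans (mul_le_mul_left (le_self_add) _)
      exact ae_restrict_of_ae_restrict_of_subset hSsub h1
    have h2 : W / V * μ S ≤ (C1 + 1) * ∫⁻ z in S, w z ∂μ := by
      calc W / V * μ S = ∫⁻ _ in S, W / V ∂μ := (setLIntegral_const S _).symm
        _ ≤ ∫⁻ z in S, (C1 + 1) * w z ∂μ := lintegral_mono_ae hae
        _ = (C1 + 1) * ∫⁻ z in S, w z ∂μ := lintegral_const_mul' _ _ (by finiteness)
    calc W = W / V * V := (ENNReal.div_mul_cancel hV0 hVtop).symm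
      _ ≤ W / V * (2 * μ S) := mul_le_mul_right hShalf _
      _ = 2 * (W / V * μ S) := by ring
      _ ≤ 2 * ((C1 + 1) * ∫⁻ z in S, w z ∂μ) := mul_le_mul_right h2 _
      _ = 2 * (C1 + 1) * ∫⁻ z in S, w z ∂μ := by ring
  · -- case 1 < p₀
    obtain ⟨C2, hC2top, hC2⟩ := hAinf.2 hp1
    refine ⟨(2 : ℝ≥0∞) ^ p₀ * C2, by
      exact ENNReal.mul_lt_top (ENNReal.rpow_lt_top_of_nonneg (by linarith) (by norm_num))
        hC2top, ?_⟩
    intro y t ht S hSm hSsub hShalf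
    set V := μ (ball y t) with hV
    set W := ∫⁻ z in ball y t, w z ∂μ with hW
    set σ := ∫⁻ z in ball y t, w z ^ (-(1 / (p₀ - 1))) ∂μ with hσ
    have hV0 : V ≠ 0 := (hpos y t ht).ne'
    have hVtop : V ≠ ⊤ := (hfin y t ht).ne
    have hWtop : W ≠ ⊤ := (hwloc y t ht).ne
    have hμS0 : μ S ≠ 0 := by
      intro h0
      rw [h0, mul_zero] at hShalf
      exact hV0 (le_antisymm hShalf bot_le)
    have hμStop : μ S ≠ ⊤ := ((measure_mono hSsub).trans_lt (hfin y t ht)).ne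
    have hp0 : (0 : ℝ) < p₀ := by linarith
    have hq : p₀.HolderConjugate (p₀ / (p₀ - 1)) := Real.HolderConjugate.conjExponent hp1
    -- main claim
    have hclaim : W * μ S ^ p₀ ≤ C2 * V ^ p₀ * ∫⁻ z in S, w z ∂μ := by
      by_cases hσtop : σ = ⊤
      · -- then W = 0
        have hA := hC2 y t ht
        rw [← hW, ← hV, ← hσ, hσtop] at hA
        rw [ENNReal.top_div_of_ne_top hVtop, ENNReal.top_rpow_of_pos (by linarith)] at hA
        have hWV : W / V = 0 := by
          by_contra hne
          rw [ENNReal.mul_top hne] at hA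
          exact (lt_irrefl ⊤ (lt_of_le_of_lt hA hC2top))
        have : W = 0 := by
          rcases ENNReal.div_eq_zero_iff.mp hWV with h | h
          · exact h
          · exact absurd h hVtop
        rw [this, zero_mul]
        exact zero_le
      · -- σ finite: Hölder argument
        have hfinball := hfin y t ht
        have haelt : ∀ᵐ z ∂(μ.restrict (ball y t)), w z ≠ ⊤ := by
          filter_upwards [ae_lt_top hw ((hwloc y t ht).ne)] with z hz
          exact hz.ne
        have haepos : ∀ᵐ z ∂(μ.restrict (ball y t)), w z ≠ 0 := by
          have h1 : ∀ᵐ z ∂(μ.restrict (ball y t)), w z ^ (-(1 / (p₀ - 1))) < ⊤ :=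
            ae_lt_top (hw.pow_const _) hσtop
          filter_upwards [h1] with z hz h0
          rw [h0, ENNReal.zero_rpow_of_neg
            (neg_lt_zero.mpr (div_pos one_pos (by linarith)))] at hz
          exact lt_irrefl _ hz
        have haeS : ∀ᵐ z ∂(μ.restrict S),
            (1 : ℝ≥0∞) = w z ^ (1 / p₀) * w z ^ (-(1 / p₀)) := by
          have := (haelt.and haepos)
          have h2 := ae_restrict_of_ae_restrict_of_subset hSsub this
          filter_upwards [h2] with z hz
          rw [← ENNReal.rpow_add _ _ hz.2 hz.1]
          simp
        have hHolder : μ S ≤ (∫⁻ z in S, w z ∂μ) ^ (1 / p₀) * σ ^ (1 / (p₀ / (p₀ - 1))) := by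
          have h0 : μ S = ∫⁻ z in S, w z ^ (1 / p₀) * w z ^ (-(1 / p₀)) ∂μ := by
            rw [← setLIntegral_one S]
            exact lintegral_congr_ae haeS
          have hH := ENNReal.lintegral_mul_le_Lp_mul_Lq (μ.restrict S) hq
            (f := fun z => w z ^ (1 / p₀)) (g := fun z => w z ^ (-(1 / p₀)))
            ((hw.pow_const _).aemeasurable) ((hw.pow_const _).aemeasurable)
          rw [h0]
          refine le_trans (le_of_eq (by rfl)) (hH.trans ?_)
          have e1 : ∀ z, (w z ^ (1 / p₀)) ^ p₀ = w z := by
            intro z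
            rw [← ENNReal.rpow_mul]
            rw [one_div, inv_mul_cancel₀ (ne_of_gt hp0), ENNReal.rpow_one]
          have e2 : ∀ z, (w z ^ (-(1 / p₀))) ^ (p₀ / (p₀ - 1)) = w z ^ (-(1 / (p₀ - 1))) := by
            intro z
            rw [← ENNReal.rpow_mul]
            congr 1
            field_simp
          refine mul_le_mul ?_ ?_ zero_le zero_le
          · refine ENNReal.rpow_le_rpow (le_of_eq ?_)
              (div_nonneg zero_le_one (le_of_lt hp0))
            exact lintegral_congr fun z => e1 z
          · refine ENNReal.rpow_le_rpow ?_
              (div_nonneg zero_le_one (div_nonneg (by linarith) (by linarith)))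
            calc ∫⁻ z in S, (w z ^ (-(1 / p₀))) ^ (p₀ / (p₀ - 1)) ∂μ
                = ∫⁻ z in S, w z ^ (-(1 / (p₀ - 1))) ∂μ := lintegral_congr fun z => e2 z
              _ ≤ σ := lintegral_mono_set hSsub
        -- raise to p₀
        have hp₀pos : (0:ℝ) ≤ p₀ := le_of_lt hp0
        have hpow : μ S ^ p₀ ≤ (∫⁻ z in S, w z ∂μ) * σ ^ (p₀ - 1) := by
          calc μ S ^ p₀ ≤ ((∫⁻ z in S, w z ∂μ) ^ (1 / p₀) * σ ^ (1 / (p₀ / (p₀ - 1)))) ^ p₀ :=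
                ENNReal.rpow_le_rpow hHolder hp₀pos
            _ = ((∫⁻ z in S, w z ∂μ) ^ (1 / p₀)) ^ p₀ * (σ ^ (1 / (p₀ / (p₀ - 1)))) ^ p₀ :=
                ENNReal.mul_rpow_of_nonneg _ _ hp₀pos
            _ = (∫⁻ z in S, w z ∂μ) * σ ^ (p₀ - 1) := by
                rw [← ENNReal.rpow_mul, ← ENNReal.rpow_mul]
                congr 1
                · rw [one_div, inv_mul_cancel₀ (ne_of_gt hp0), ENNReal.rpow_one]
                · congr 1
                  field_simp
        -- A_p bound: W * σ ^ (p₀ - 1) ≤ C2 * V ^ p₀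
        have hAp : W * σ ^ (p₀ - 1) ≤ C2 * V ^ p₀ := by
          have hA := hC2 y t ht
          rw [← hW, ← hV, ← hσ] at hA
          have hstep : W / V * (σ ^ (p₀ - 1) / V ^ (p₀ - 1)) ≤ C2 := by
            rwa [ENNReal.div_rpow_of_nonneg _ _ (by linarith)] at hA
          have hVp : V ^ (p₀ - 1) ≠ 0 := by
            simp only [ne_eq, ENNReal.rpow_eq_zero_iff, not_or]
            constructor
            · rintro ⟨h, _⟩; exact hV0 h
            · rintro ⟨h, _⟩; exact hVtop h
          have hVpt : V ^ (p₀ - 1) ≠ ⊤ :=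
            (ENNReal.rpow_lt_top_of_nonneg (by linarith) hVtop).ne
          have hcomb : (W * σ ^ (p₀ - 1)) / (V * V ^ (p₀ - 1)) ≤ C2 := by
            rw [div_eq_mul_inv, ENNReal.mul_inv (Or.inl hV0) (Or.inl hVtop)]
            calc W * σ ^ (p₀ - 1) * (V⁻¹ * (V ^ (p₀ - 1))⁻¹)
                = (W * V⁻¹) * (σ ^ (p₀ - 1) * (V ^ (p₀ - 1))⁻¹) := by ring
              _ = W / V * (σ ^ (p₀ - 1) / V ^ (p₀ - 1)) := by
                  rw [div_eq_mul_inv, div_eq_mul_inv]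
              _ ≤ C2 := hstep
          have hVV : V * V ^ (p₀ - 1) = V ^ p₀ := by
            nth_rewrite 1 [← ENNReal.rpow_one V]
            rw [← ENNReal.rpow_add _ _ hV0 hVtop]
            norm_num
          rw [← hVV]
          have := (ENNReal.div_le_iff_le_mul
            (Or.inl (mul_ne_zero hV0 hVp))
            (Or.inl (ENNReal.mul_ne_top hVtop hVpt))).mp hcomb
          calc W * σ ^ (p₀ - 1) ≤ C2 * (V * V ^ (p₀ - 1)) := this
            _ = C2 * (V * V ^ (p₀ - 1)) := rfl
        calc W * μ S ^ p₀ ≤ W * ((∫⁻ z in S, w z ∂μ) * σ ^ (p₀ - 1)) :=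
              mul_le_mul_right hpow _
          _ = (W * σ ^ (p₀ - 1)) * ∫⁻ z in S, w z ∂μ := by ring
          _ ≤ (C2 * V ^ p₀) * ∫⁻ z in S, w z ∂μ := mul_le_mul_left hAp _
          _ = C2 * V ^ p₀ * ∫⁻ z in S, w z ∂μ := rfl
    -- conclude using V ≤ 2 μ S
    have hVp : V ^ p₀ ≤ 2 ^ p₀ * μ S ^ p₀ := by
      calc V ^ p₀ ≤ (2 * μ S) ^ p₀ := ENNReal.rpow_le_rpow hShalf (by linarith)
        _ = 2 ^ p₀ * μ S ^ p₀ := ENNReal.mul_rpow_of_nonneg _ _ (by linarith)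
    have hμSp0 : μ S ^ p₀ ≠ 0 := by
      simp only [ne_eq, ENNReal.rpow_eq_zero_iff, not_or]
      exact ⟨fun ⟨h, _⟩ => hμS0 h, fun ⟨h, _⟩ => hμStop h⟩
    have hμSpt : μ S ^ p₀ ≠ ⊤ := (ENNReal.rpow_lt_top_of_nonneg (by linarith) hμStop).ne
    rw [← ENNReal.mul_le_mul_iff_left hμSp0 hμSpt]
    calc W * μ S ^ p₀ ≤ C2 * V ^ p₀ * ∫⁻ z in S, w z ∂μ := hclaim
      _ ≤ C2 * (2 ^ p₀ * μ S ^ p₀) * ∫⁻ z in S, w z ∂μ := by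
          exact mul_le_mul_left (mul_le_mul_right hVp _) _
      _ = 2 ^ p₀ * C2 * (∫⁻ z in S, w z ∂μ) * μ S ^ p₀ := by ring

lemma aux_sqrt_sq (a : ℝ≥0∞) : (a ^ (1 / 2 : ℝ)) ^ (2 : ℕ) = a := by
  rw [← ENNReal.rpow_natCast (a ^ (1 / 2 : ℝ)) 2, ← ENNReal.rpow_mul]
  norm_num


/-- Lemma 3.7: on a space of homogeneous type with `μ(X) = ∞` and
`w ∈ A_∞`, for every sufficiently small `γ ∈ (0,1)` there is a constant `C` such that
for every measurable `F` on `X × (0,∞)`, every ball `B` and every measurable `E ⊆ B`,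
with `Ω = {x ∈ B : ℳ(χ_E)(x) > γ}`,
`∬_{B̂ \ Ω̂} |F(y,t)|² (w(B(y,t))/V(y,t)) dμ(y)dt/t
  ≤ C ∫_{B \ E} 𝒜(F)(x)² w(x) dμ(x)`. -/
theorem statement11
    {X : Type*} [MetricSpace X] [MeasurableSpace X] [BorelSpace X]
    (μ : Measure X)
    (Cd : ℝ≥0∞) (hCd : Cd < ⊤)
    (hdb : ∀ (x : X) (r : ℝ), 0 < r → μ (ball x (2 * r)) ≤ Cd * μ (ball x r))
    (hpos : ∀ (x : X) (r : ℝ), 0 < r → 0 < μ (ball x r))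
    (hfin : ∀ (x : X) (r : ℝ), 0 < r → μ (ball x r) < ⊤)
    (hμinf : μ Set.univ = ⊤)
    (w : X → ℝ≥0∞) (hw : Measurable w)
    (hwloc : ∀ (x : X) (r : ℝ), 0 < r → ∫⁻ y in ball x r, w y ∂μ < ⊤)
    (p₀ : ℝ) (hp₀ : 1 ≤ p₀)
    (hAinf : (p₀ = 1 → IsA1 μ w) ∧ (1 < p₀ → IsAp μ w p₀)) :
    ∃ γ₀ : ℝ, 0 < γ₀ ∧ γ₀ < 1 ∧ ∀ γ : ℝ, 0 < γ → γ ≤ γ₀ →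
      ∃ C : ℝ≥0∞, C < ⊤ ∧
        ∀ F : X → ℝ → ℝ, Measurable (fun q : X × ℝ => F q.1 q.2) →
        ∀ (xB : X) (rB : ℝ), 0 < rB →
        ∀ E : Set X, MeasurableSet E → E ⊆ ball xB rB →
        (∫⁻ t in Set.Ioi (0 : ℝ),
            ∫⁻ y in {y : X | dist y xB + t < rB ∧
                ¬ ball y t ⊆ {x ∈ ball xB rB | ENNReal.ofReal γ < maxFn μ E x}},
              ENNReal.ofReal ((F y t) ^ 2) * (∫⁻ z in ball y t, w z ∂μ) /
                (μ (ball y t) * ENNReal.ofReal t) ∂μ) ≤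
          C * ∫⁻ x in ball xB rB \ E, areaA μ F x ^ 2 * w x ∂μ := by
  -- basic setup
  have hXne : Nonempty X := by
    by_contra h
    rw [not_nonempty_iff] at h
    rw [Set.univ_eq_empty_iff.mpr h, measure_empty] at hμinf
    exact ENNReal.zero_ne_top hμinf
  obtain ⟨x₀⟩ := hXne
  letI := aux_secondCountable μ Cd hCd hdb hpos hfin x₀
  letI := aux_sigmaFinite μ hfin x₀
  have hCd0 : Cd ≠ 0 := by
    intro h0
    have := hdb x₀ 1 one_pos
    rw [h0, zero_mul] at this
    exact absurd (le_antisymm this bot_le) (hpos x₀ (2 * 1) (by norm_num)).ne'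
  obtain ⟨K, hKtop, hKW⟩ := aux_KW μ hpos hfin w hw hwloc p₀ hp₀ hAinf
  refine ⟨1 / 2, by norm_num, by norm_num, ?_⟩
  intro γ hγ0 hγle
  refine ⟨K * Cd, ENNReal.mul_lt_top hKtop hCd, ?_⟩
  intro F hF xB rB hrB E hE hEB
  have hKCd : K * Cd ≠ ⊤ := (ENNReal.mul_lt_top hKtop hCd).ne
  set A : Set X := ball xB rB \ E with hA
  have hAm : MeasurableSet A := measurableSet_ball.diff hE
  set M : X → ℝ → ℝ≥0∞ :=
    fun y t => ∫⁻ x in ball y t ∩ A, (μ (ball x t))⁻¹ * w x ∂μ with hM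
  set g : X → ℝ → ℝ≥0∞ :=
    fun y t => ENNReal.ofReal ((F y t) ^ 2) * (ENNReal.ofReal t)⁻¹ with hg
  -- measurability of basic bricks
  have hFE : Measurable fun q : X × ℝ => ENNReal.ofReal ((F q.1 q.2) ^ 2) :=
    (hF.pow_const 2).ennreal_ofReal
  have hballset : MeasurableSet {q : (X × ℝ) × X | q.2 ∈ ball q.1.1 q.1.2} := by
    have : {q : (X × ℝ) × X | q.2 ∈ ball q.1.1 q.1.2}
        = {q : (X × ℝ) × X | dist q.2 q.1.1 < q.1.2} := rfl
    rw [this]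
    exact measurableSet_lt
      (measurable_dist.comp (measurable_snd.prodMk (measurable_fst.comp measurable_fst)))
      (measurable_snd.comp measurable_fst)
  have hVmeas : Measurable fun q : X × ℝ => μ (ball q.1 q.2) := by
    have heq : (fun q : X × ℝ => μ (ball q.1 q.2)) = fun q : X × ℝ =>
        ∫⁻ z, ({q' : (X × ℝ) × X | q'.2 ∈ ball q'.1.1 q'.1.2}.indicator
          (fun _ => (1 : ℝ≥0∞))) (q, z) ∂μ := by
      funext q
      rw [← lintegral_indicator_one (measurableSet_ball (x := q.1) (ε := q.2))]
      congr 1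
    rw [heq]
    exact Measurable.lintegral_prod_right' (measurable_const.indicator hballset)
  have hGmeas : Measurable fun q : X × ℝ =>
      ∫⁻ y in ball q.1 q.2, ENNReal.ofReal ((F y q.2) ^ 2) ∂μ := by
    have heq : (fun q : X × ℝ => ∫⁻ y in ball q.1 q.2, ENNReal.ofReal ((F y q.2) ^ 2) ∂μ)
        = fun q : X × ℝ => ∫⁻ y, ({q' : (X × ℝ) × X | q'.2 ∈ ball q'.1.1 q'.1.2}.indicator
            (fun q' => ENNReal.ofReal ((F q'.2 q'.1.2) ^ 2))) (q, y) ∂μ := by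
      funext q
      rw [← lintegral_indicator measurableSet_ball]
      congr 1
    rw [heq]
    refine Measurable.lintegral_prod_right'
      ((hFE.comp (measurable_snd.prodMk (measurable_snd.comp measurable_fst))).indicator
        hballset)
  set J : X × ℝ → ℝ≥0∞ := fun q =>
    (∫⁻ y in ball q.1 q.2, ENNReal.ofReal ((F y q.2) ^ 2) ∂μ) *
      (μ (ball q.1 q.2) * ENNReal.ofReal q.2)⁻¹ with hJ
  have hJmeas : Measurable J :=
    hGmeas.mul ((hVmeas.mul (ENNReal.measurable_ofReal.comp measurable_snd)).inv)
  -- area functional squared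
  have hR1 : ∀ x : X, areaA μ F x ^ 2 = ∫⁻ t in Ioi (0 : ℝ), J (x, t) := by
    intro x
    simp only [areaA]
    rw [aux_sqrt_sq]
    refine lintegral_congr_ae ?_
    filter_upwards [ae_restrict_mem measurableSet_Ioi] with t ht
    have hVt0 : μ (ball x t) * ENNReal.ofReal t ≠ 0 :=
      mul_ne_zero (hpos x t ht).ne' (ENNReal.ofReal_pos.mpr ht).ne'
    simp only [div_eq_mul_inv]
    rw [lintegral_mul_const' _ _ (ENNReal.inv_ne_top.mpr hVt0)]
  -- Fubini step for fixed t
  have hfix : ∀ t : ℝ, t ∈ Ioi (0 : ℝ) →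
      ∫⁻ x in A, J (x, t) * w x ∂μ = ∫⁻ y, g y t * M y t ∂μ := by
    intro t ht
    have ht' : (0 : ℝ) < t := ht
    have hs0 : ENNReal.ofReal t ≠ 0 := (ENNReal.ofReal_pos.mpr ht').ne'
    set k : X → X → ℝ≥0∞ := fun x y =>
      (ball x t).indicator (fun y' => ENNReal.ofReal ((F y' t) ^ 2)) y *
        ((μ (ball x t) * ENNReal.ofReal t)⁻¹ * w x) with hk
    have hstep_a : ∀ x : X, J (x, t) * w x = ∫⁻ y, k x y ∂μ := by
      intro x
      have hind : Measurable fun y =>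
          (ball x t).indicator (fun y' => ENNReal.ofReal ((F y' t) ^ 2)) y :=
        ((hFE.comp (measurable_prodMk_right (y := t)))).indicator measurableSet_ball
      calc J (x, t) * w x
          = (∫⁻ y, (ball x t).indicator (fun y' => ENNReal.ofReal ((F y' t) ^ 2)) y ∂μ) *
            ((μ (ball x t) * ENNReal.ofReal t)⁻¹ * w x) := by
            rw [lintegral_indicator measurableSet_ball]
            simp only [hJ]
            rw [mul_assoc]
        _ = ∫⁻ y, k x y ∂μ := (lintegral_mul_const _ hind).symm
    have hkmeas : Measurable fun q : X × X => k q.1 q.2 := by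
      have hset : MeasurableSet {q : X × X | q.2 ∈ ball q.1 t} := by
        have : {q : X × X | q.2 ∈ ball q.1 t} = {q : X × X | dist q.2 q.1 < t} := rfl
        rw [this]
        exact measurableSet_lt
          (measurable_dist.comp (measurable_snd.prodMk measurable_fst)) measurable_const
      have heq : (fun q : X × X => k q.1 q.2) = fun q : X × X =>
          ({q' : X × X | q'.2 ∈ ball q'.1 t}.indicator
            (fun q' => ENNReal.ofReal ((F q'.2 t) ^ 2))) q *
            ((μ (ball q.1 t) * ENNReal.ofReal t)⁻¹ * w q.1) := by
        funext q
        rw [hk]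
        simp only [Set.indicator_apply]
        congr 1
      rw [heq]
      refine Measurable.mul ?_ ?_
      · exact (hFE.comp (measurable_snd.prodMk measurable_const)).indicator hset
      · exact (((hVmeas.comp (measurable_fst.prodMk measurable_const)).mul
          measurable_const).inv).mul (hw.comp measurable_fst)
    have hstep_c : ∀ y : X, ∫⁻ x in A, k x y ∂μ = g y t * M y t := by
      intro y
      have hk2 : ∀ x : X, k x y = (ball y t).indicator
          (fun x' => ENNReal.ofReal ((F y t) ^ 2) *
            ((μ (ball x' t) * ENNReal.ofReal t)⁻¹ * w x')) x := by
        intro x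
        simp only [hk]
        by_cases h : dist x y < t
        · rw [Set.indicator_of_mem (show y ∈ ball x t by
              rw [mem_ball, dist_comm]; exact h),
            Set.indicator_of_mem (mem_ball.mpr h)]
        · rw [Set.indicator_of_notMem (show y ∉ ball x t by
              rw [mem_ball, dist_comm]; exact h),
            Set.indicator_of_notMem (fun hc => h (mem_ball.mp hc))]
          simp
      calc ∫⁻ x in A, k x y ∂μ
          = ∫⁻ x in A, (ball y t).indicator
              (fun x' => ENNReal.ofReal ((F y t) ^ 2) *
                ((μ (ball x' t) * ENNReal.ofReal t)⁻¹ * w x')) x ∂μ :=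
            lintegral_congr fun x => by rw [hk2 x]
        _ = ∫⁻ x in ball y t ∩ A, ENNReal.ofReal ((F y t) ^ 2) *
              ((μ (ball x t) * ENNReal.ofReal t)⁻¹ * w x) ∂μ := by
            rw [lintegral_indicator measurableSet_ball,
              Measure.restrict_restrict measurableSet_ball]
        _ = ENNReal.ofReal ((F y t) ^ 2) * ∫⁻ x in ball y t ∩ A,
              (μ (ball x t) * ENNReal.ofReal t)⁻¹ * w x ∂μ :=
            lintegral_const_mul' _ _ ENNReal.ofReal_ne_top
        _ = ENNReal.ofReal ((F y t) ^ 2) * ∫⁻ x in ball y t ∩ A,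
              (ENNReal.ofReal t)⁻¹ * ((μ (ball x t))⁻¹ * w x) ∂μ := by
            congr 1
            refine lintegral_congr fun x => ?_
            rw [ENNReal.mul_inv (Or.inr ENNReal.ofReal_ne_top) (Or.inr hs0)]
            ring
        _ = ENNReal.ofReal ((F y t) ^ 2) * ((ENNReal.ofReal t)⁻¹ * M y t) := by
            rw [lintegral_const_mul' _ _ (ENNReal.inv_ne_top.mpr hs0), hM]
        _ = g y t * M y t := by rw [hg]; ring
    calc ∫⁻ x in A, J (x, t) * w x ∂μ
        = ∫⁻ x in A, ∫⁻ y, k x y ∂μ ∂μ := lintegral_congr fun x => hstep_a x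
      _ = ∫⁻ y, ∫⁻ x in A, k x y ∂μ ∂μ := lintegral_lintegral_swap hkmeas.aemeasurable
      _ = ∫⁻ y, g y t * M y t ∂μ := lintegral_congr fun y => hstep_c y
  -- the right-hand side
  have hReq : ∫⁻ x in A, areaA μ F x ^ 2 * w x ∂μ
      = ∫⁻ t in Ioi (0 : ℝ), ∫⁻ y, g y t * M y t ∂μ := by
    calc ∫⁻ x in A, areaA μ F x ^ 2 * w x ∂μ
        = ∫⁻ x in A, (∫⁻ t in Ioi (0 : ℝ), J (x, t) * w x) ∂μ := by
          refine lintegral_congr fun x => ?_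
          rw [hR1 x]
          exact (lintegral_mul_const (w x) (hJmeas.comp measurable_prodMk_left)).symm
      _ = ∫⁻ t in Ioi (0 : ℝ), ∫⁻ x in A, J (x, t) * w x ∂μ :=
          lintegral_lintegral_swap ((hJmeas.mul (hw.comp measurable_fst)).aemeasurable)
      _ = ∫⁻ t in Ioi (0 : ℝ), ∫⁻ y, g y t * M y t ∂μ := by
          refine lintegral_congr_ae ?_
          filter_upwards [ae_restrict_mem measurableSet_Ioi] with t ht
          exact hfix t ht
  -- pointwise estimate
  have hpoint : ∀ t : ℝ, (0 : ℝ) < t → ∀ y : X, dist y xB + t < rB →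
      ¬ ball y t ⊆ {x ∈ ball xB rB | ENNReal.ofReal γ < maxFn μ E x} →
      ENNReal.ofReal ((F y t) ^ 2) * (∫⁻ z in ball y t, w z ∂μ) /
        (μ (ball y t) * ENNReal.ofReal t) ≤ K * Cd * (g y t * M y t) := by
    intro t ht y hy1 hy2
    have hV0 : μ (ball y t) ≠ 0 := (hpos y t ht).ne'
    have hVtop : μ (ball y t) ≠ ⊤ := (hfin y t ht).ne
    have hs0 : ENNReal.ofReal t ≠ 0 := (ENNReal.ofReal_pos.mpr ht).ne'
    have hsub : ball y t ⊆ ball xB rB := by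
      intro z hz
      rw [mem_ball] at hz ⊢
      have := dist_triangle z y xB
      linarith
    obtain ⟨x₁, hx₁b, hx₁Ω⟩ := Set.not_subset.mp hy2
    have hmax : maxFn μ E x₁ ≤ ENNReal.ofReal γ := by
      refine not_lt.mp fun hlt => hx₁Ω ⟨hsub hx₁b, hlt⟩
    have hratio : μ (E ∩ ball y t) / μ (ball y t) ≤ ENNReal.ofReal γ := by
      refine le_trans ?_ hmax
      rw [maxFn]
      exact le_iSup_of_le y (le_iSup_of_le t (le_iSup_of_le ht (le_iSup_of_le hx₁b le_rfl)))
    have hγhalf : ENNReal.ofReal γ ≤ 2⁻¹ := by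
      calc ENNReal.ofReal γ ≤ ENNReal.ofReal (1 / 2) := ENNReal.ofReal_le_ofReal hγle
        _ = 2⁻¹ := by
          rw [one_div, ENNReal.ofReal_inv_of_pos two_pos, ENNReal.ofReal_ofNat]
    have hEhalf : μ (E ∩ ball y t) ≤ 2⁻¹ * μ (ball y t) :=
      (ENNReal.div_le_iff_le_mul (Or.inl hV0) (Or.inl hVtop)).mp (hratio.trans hγhalf)
    have hS2 : μ (ball y t) ≤ 2 * μ (ball y t \ E) := by
      have hsplit : μ (ball y t) ≤ μ (E ∩ ball y t) + μ (ball y t \ E) := by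
        refine le_trans (measure_mono ?_) (measure_union_le _ _)
        intro z hz
        by_cases hzE : z ∈ E
        · exact Or.inl ⟨hzE, hz⟩
        · exact Or.inr ⟨hz, hzE⟩
      have h2 : 2⁻¹ * μ (ball y t) + 2⁻¹ * μ (ball y t) ≤
          2⁻¹ * μ (ball y t) + μ (ball y t \ E) := by
        have hVeq : 2⁻¹ * μ (ball y t) + 2⁻¹ * μ (ball y t) = μ (ball y t) := by
          rw [← add_mul, ENNReal.inv_two_add_inv_two, one_mul]
        rw [hVeq]
        exact hsplit.trans (add_le_add_left hEhalf _)
      have h3 : 2⁻¹ * μ (ball y t) ≤ μ (ball y t \ E) :=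
        (ENNReal.add_le_add_iff_left (by finiteness)).mp h2
      calc μ (ball y t) = 2 * (2⁻¹ * μ (ball y t)) := by
            rw [← mul_assoc, ENNReal.mul_inv_cancel two_ne_zero (by norm_num), one_mul]
        _ ≤ 2 * μ (ball y t \ E) := mul_le_mul_right h3 _
    have hKW' : (∫⁻ z in ball y t, w z ∂μ) ≤ K * ∫⁻ z in ball y t \ E, w z ∂μ :=
      hKW y t ht _ (measurableSet_ball.diff hE) diff_subset hS2
    have hMeq : ball y t ∩ A = ball y t \ E := by
      rw [hA]
      ext z
      constructor
      · rintro ⟨h1, _, h3⟩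
        exact ⟨h1, h3⟩
      · rintro ⟨h1, h2⟩
        exact ⟨h1, hsub h1, h2⟩
    have hWV : (∫⁻ z in ball y t, w z ∂μ) * (μ (ball y t))⁻¹ ≤ K * Cd * M y t := by
      have hinv : ∀ x ∈ ball y t, (μ (ball y t))⁻¹ ≤ Cd * (μ (ball x t))⁻¹ := by
        intro x hx
        have hdbl : μ (ball x t) ≤ Cd * μ (ball y t) := by
          refine le_trans (measure_mono ?_) (hdb y t ht)
          intro z hz
          rw [mem_ball] at hx hz ⊢
          have := dist_triangle z x y
          linarith
        have h1 : (Cd * μ (ball y t))⁻¹ ≤ (μ (ball x t))⁻¹ := ENNReal.inv_le_inv' hdbl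
        calc (μ (ball y t))⁻¹ = Cd * (Cd * μ (ball y t))⁻¹ := by
              rw [ENNReal.mul_inv (Or.inl hCd0) (Or.inl hCd.ne), ← mul_assoc,
                ENNReal.mul_inv_cancel hCd0 hCd.ne, one_mul]
          _ ≤ Cd * (μ (ball x t))⁻¹ := mul_le_mul_right h1 _
      calc (∫⁻ z in ball y t, w z ∂μ) * (μ (ball y t))⁻¹
          ≤ (K * ∫⁻ z in ball y t \ E, w z ∂μ) * (μ (ball y t))⁻¹ :=
            mul_le_mul_left hKW' _
        _ = K * ((∫⁻ z in ball y t \ E, w z ∂μ) * (μ (ball y t))⁻¹) := mul_assoc _ _ _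
        _ = K * ∫⁻ z in ball y t \ E, w z * (μ (ball y t))⁻¹ ∂μ := by
            rw [lintegral_mul_const' _ _ (ENNReal.inv_ne_top.mpr hV0)]
        _ ≤ K * ∫⁻ z in ball y t \ E, Cd * ((μ (ball z t))⁻¹ * w z) ∂μ := by
            refine mul_le_mul_right (lintegral_mono_ae ?_) _
            filter_upwards [ae_restrict_mem (measurableSet_ball.diff hE)] with z hz
            calc w z * (μ (ball y t))⁻¹ ≤ w z * (Cd * (μ (ball z t))⁻¹) :=
                  mul_le_mul_right (hinv z hz.1) _
              _ = Cd * ((μ (ball z t))⁻¹ * w z) := by ring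
        _ = K * (Cd * ∫⁻ z in ball y t \ E, (μ (ball z t))⁻¹ * w z ∂μ) := by
            rw [lintegral_const_mul' _ _ hCd.ne]
        _ = K * Cd * M y t := by
            simp only [hM]
            rw [hMeq, mul_assoc]
    calc ENNReal.ofReal ((F y t) ^ 2) * (∫⁻ z in ball y t, w z ∂μ) /
          (μ (ball y t) * ENNReal.ofReal t)
        = g y t * ((∫⁻ z in ball y t, w z ∂μ) * (μ (ball y t))⁻¹) := by
          rw [div_eq_mul_inv, ENNReal.mul_inv (Or.inl hV0) (Or.inl hVtop), hg]
          ring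
      _ ≤ g y t * (K * Cd * M y t) := mul_le_mul_right hWV _
      _ = K * Cd * (g y t * M y t) := by ring
  -- measurability of the region
  have hSmeas : ∀ t : ℝ, MeasurableSet {y : X | dist y xB + t < rB ∧
      ¬ ball y t ⊆ {x ∈ ball xB rB | ENNReal.ofReal γ < maxFn μ E x}} := by
    intro t
    set Ω := {x ∈ ball xB rB | ENNReal.ofReal γ < maxFn μ E x} with hΩ
    have heq : {y : X | dist y xB + t < rB ∧ ¬ ball y t ⊆ Ω}
        = {y : X | dist y xB + t < rB} ∩ ⋃ x ∈ Ωᶜ, ball x t := by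
      ext y
      simp only [Set.mem_setOf_eq, Set.mem_inter_iff, Set.mem_iUnion, Set.mem_compl_iff,
        exists_prop]
      constructor
      · rintro ⟨h1, h2⟩
        obtain ⟨x, hx1, hx2⟩ := Set.not_subset.mp h2
        exact ⟨h1, x, hx2, mem_ball_comm.mp hx1⟩
      · rintro ⟨h1, x, hx1, hx2⟩
        exact ⟨h1, fun hsub => hx1 (hsub (mem_ball_comm.mp hx2))⟩
    rw [heq]
    refine MeasurableSet.inter ?_ ?_
    · exact IsOpen.measurableSet (isOpen_lt (by fun_prop) continuous_const)
    · exact (isOpen_biUnion fun x _ => isOpen_ball).measurableSet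
  -- conclusion
  rw [hReq]
  calc ∫⁻ t in Ioi (0 : ℝ),
      ∫⁻ y in {y : X | dist y xB + t < rB ∧
          ¬ ball y t ⊆ {x ∈ ball xB rB | ENNReal.ofReal γ < maxFn μ E x}},
        ENNReal.ofReal ((F y t) ^ 2) * (∫⁻ z in ball y t, w z ∂μ) /
          (μ (ball y t) * ENNReal.ofReal t) ∂μ
      ≤ ∫⁻ t in Ioi (0 : ℝ), K * Cd * ∫⁻ y, g y t * M y t ∂μ := by
        refine lintegral_mono_ae ?_
        filter_upwards [ae_restrict_mem measurableSet_Ioi] with t ht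
        calc ∫⁻ y in {y : X | dist y xB + t < rB ∧
              ¬ ball y t ⊆ {x ∈ ball xB rB | ENNReal.ofReal γ < maxFn μ E x}},
              ENNReal.ofReal ((F y t) ^ 2) * (∫⁻ z in ball y t, w z ∂μ) /
                (μ (ball y t) * ENNReal.ofReal t) ∂μ
            ≤ ∫⁻ y in {y : X | dist y xB + t < rB ∧
              ¬ ball y t ⊆ {x ∈ ball xB rB | ENNReal.ofReal γ < maxFn μ E x}},
              K * Cd * (g y t * M y t) ∂μ := by
              refine lintegral_mono_ae ?_
              filter_upwards [ae_restrict_mem (hSmeas t)] with y hy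
              exact hpoint t ht y hy.1 hy.2
          _ ≤ ∫⁻ y, K * Cd * (g y t * M y t) ∂μ := setLIntegral_le_lintegral _ _
          _ = K * Cd * ∫⁻ y, g y t * M y t ∂μ := lintegral_const_mul' _ _ hKCd
    _ = K * Cd * ∫⁻ t in Ioi (0 : ℝ), ∫⁻ y, g y t * M y t ∂μ :=
        lintegral_const_mul' _ _ hKCd
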